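/- Let H(s) = (1−s)L_G + s·diag(W) with min-gap condition γ(1) ≥ 1 (the second-smallest value of W exceeds the minimum of W by at least 1, and W has a unique minimizer). Then for all s ∈ [1 − 1/(8d_G), 1], the spectral gap satisfies γ(s) ≥ 1/2 − 1/(8d_G); in particular γ(s) ≥ 7/16 whenever d_G ≥ 2. -/

import Mathlib

/-!
At the minimizer `x₀` the diagonal entry of `H(s)` is `(1 - s) deg x₀ + s W x₀`, which bounds the
smallest eigenvalue from above. On the hyperplane `v x₀ = 0` the quadratic form of `H(s)` is at
least `s (W x₀ + 1) ‖v‖²`, since `L_G` is positive semidefinite and `W ≥ W x₀ + 1` off `x₀`; as some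
nonzero combination of the two lowest eigenvectors lies in that hyperplane, this bounds the second
eigenvalue from below. The gap is therefore at least `s - (1 - s) d_G ≥ 7/8 - 1/(8 d_G)`.
-/

open Matrix

noncomputable def sortedEigenvalues {n : Type*} [Fintype n] [DecidableEq n]
    {A : Matrix n n ℝ} (hA : A.IsHermitian) : Fin (Fintype.card n) → ℝ :=
  fun i =>
    let f : Fin (Fintype.card n) → ℝ := hA.eigenvalues ∘ (Fintype.equivFin n).symm
    f (Tuple.sort f i)

/-- Gap between the two smallest eigenvalues, counted with multiplicity. -/
noncomputable def specGap {n : Type*} [Fintype n] [DecidableEq n]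
    {A : Matrix n n ℝ} (hA : A.IsHermitian) : ℝ :=
  if h : 2 ≤ Fintype.card n then
    sortedEigenvalues hA ⟨1, by omega⟩ - sortedEigenvalues hA ⟨0, by omega⟩
  else 0

/-- The interpolating Hamiltonian `H(s) = (1−s)L_G + s·diag W`. -/
noncomputable def hamiltonianS {V : Type*} [Fintype V] [DecidableEq V]
    (G : SimpleGraph V) [DecidableRel G.Adj] (W : V → ℝ) (s : ℝ) : Matrix V V ℝ :=
  (1 - s) • G.lapMatrix ℝ + s • Matrix.diagonal W

lemma isHermitian_smul_real {n : Type*} {A : Matrix n n ℝ}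
    (h : A.IsHermitian) (c : ℝ) : (c • A).IsHermitian := by
  unfold Matrix.IsHermitian at *
  rw [Matrix.conjTranspose_smul, h, star_trivial]

lemma hamiltonianS_isHermitian {V : Type*} [Fintype V] [DecidableEq V]
    (G : SimpleGraph V) [DecidableRel G.Adj] (W : V → ℝ) (s : ℝ) :
    (hamiltonianS G W s).IsHermitian :=
  (isHermitian_smul_real (SimpleGraph.posSemidef_lapMatrix ℝ G).isHermitian (1 - s)).add
    (isHermitian_smul_real (Matrix.isHermitian_diagonal W) s)

namespace Matrix.IsHermitian

variable {n : Type*} [Fintype n] [DecidableEq n] {A : Matrix n n ℝ} (hA : A.IsHermitian)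

theorem sum_dotProduct_eigenvectorBasis_mul (v w : n → ℝ) :
    ∑ i, (⇑(hA.eigenvectorBasis i) ⬝ᵥ v) * (⇑(hA.eigenvectorBasis i) ⬝ᵥ w) = v ⬝ᵥ w := by
  have h := hA.eigenvectorBasis.sum_inner_mul_inner (WithLp.toLp 2 v) (WithLp.toLp 2 w)
  simpa [PiLp.inner_apply, dotProduct, mul_comm] using h

theorem dotProduct_mulVec_eq_sum (v : n → ℝ) :
    v ⬝ᵥ (A *ᵥ v) = ∑ i, hA.eigenvalues i * (⇑(hA.eigenvectorBasis i) ⬝ᵥ v) ^ 2 := by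
  rw [← hA.sum_dotProduct_eigenvectorBasis_mul]
  refine Finset.sum_congr rfl fun i _ => ?_
  rw [dotProduct_mulVec, ← mulVec_transpose, ← conjTranspose_eq_transpose_of_trivial, hA.eq,
    hA.mulVec_eigenvectorBasis, smul_dotProduct, smul_eq_mul]
  ring

theorem mul_dotProduct_self_le {c : ℝ} (hc : ∀ i, c ≤ hA.eigenvalues i) (v : n → ℝ) :
    c * (v ⬝ᵥ v) ≤ v ⬝ᵥ (A *ᵥ v) := by
  rw [← hA.sum_dotProduct_eigenvectorBasis_mul, hA.dotProduct_mulVec_eq_sum, Finset.mul_sum]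
  exact Finset.sum_le_sum fun i _ => by
    rw [← sq]
    exact mul_le_mul_of_nonneg_right (hc i) (sq_nonneg _)

theorem dotProduct_eigenvectorBasis (i j : n) :
    ⇑(hA.eigenvectorBasis i) ⬝ᵥ ⇑(hA.eigenvectorBasis j) = if i = j then 1 else 0 := by
  have h := orthonormal_iff_ite.mp hA.eigenvectorBasis.orthonormal i j
  simpa [PiLp.inner_apply, dotProduct, mul_comm] using h

theorem le_max_eigenvalues_of_forall_dotProduct_eq_zero (w : n → ℝ) {a : ℝ}
    (h : ∀ v, w ⬝ᵥ v = 0 → a * (v ⬝ᵥ v) ≤ v ⬝ᵥ (A *ᵥ v)) {i j : n} (hij : i ≠ j) :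
    a ≤ max (hA.eigenvalues i) (hA.eigenvalues j) := by
  set u : n → n → ℝ := fun k => ⇑(hA.eigenvectorBasis k) with hu
  obtain ⟨c₁, c₂, hc, hw⟩ : ∃ c₁ c₂ : ℝ, 0 < c₁ ^ 2 + c₂ ^ 2 ∧
      c₁ * (w ⬝ᵥ u i) + c₂ * (w ⬝ᵥ u j) = 0 := by
    by_cases hi : w ⬝ᵥ u i = 0
    · exact ⟨1, 0, by norm_num, by simp [hi]⟩
    · exact ⟨w ⬝ᵥ u j, -(w ⬝ᵥ u i),
        by nlinarith [sq_nonneg (w ⬝ᵥ u j), sq_pos_of_ne_zero (neg_ne_zero.mpr hi)], by ring⟩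
  have hv := h (c₁ • u i + c₂ • u j) (by simpa [dotProduct_add, dotProduct_smul] using hw)
  simp only [hu, mulVec_add, mulVec_smul, hA.mulVec_eigenvectorBasis, add_dotProduct,
    dotProduct_add, smul_dotProduct, dotProduct_smul, hA.dotProduct_eigenvectorBasis, hij,
    hij.symm, if_true, if_false, smul_eq_mul] at hv
  refine le_of_mul_le_mul_right ?_ hc
  nlinarith [le_max_left (hA.eigenvalues i) (hA.eigenvalues j),
    le_max_right (hA.eigenvalues i) (hA.eigenvalues j), sq_nonneg c₁, sq_nonneg c₂]

end Matrix.IsHermitian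

section SortedEigenvalues

variable {n : Type*} [Fintype n] [DecidableEq n] {A : Matrix n n ℝ} (hA : A.IsHermitian)

theorem exists_equiv_sortedEigenvalues_eq :
    ∃ e : Fin (Fintype.card n) ≃ n, sortedEigenvalues hA = hA.eigenvalues ∘ e :=
  ⟨(Tuple.sort _).trans (Fintype.equivFin n).symm, rfl⟩

theorem monotone_sortedEigenvalues : Monotone (sortedEigenvalues hA) :=
  Tuple.monotone_sort (hA.eigenvalues ∘ (Fintype.equivFin n).symm)

theorem sortedEigenvalues_zero_mul_le (h : 0 < Fintype.card n) (v : n → ℝ) :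
    sortedEigenvalues hA ⟨0, h⟩ * (v ⬝ᵥ v) ≤ v ⬝ᵥ (A *ᵥ v) := by
  obtain ⟨e, he⟩ := exists_equiv_sortedEigenvalues_eq hA
  refine hA.mul_dotProduct_self_le (fun i => ?_) v
  simpa [he] using monotone_sortedEigenvalues hA (a := ⟨0, h⟩) (b := e.symm i) (Nat.zero_le _)

theorem le_sortedEigenvalues_one (h : 1 < Fintype.card n) (w : n → ℝ) {a : ℝ}
    (hq : ∀ v, w ⬝ᵥ v = 0 → a * (v ⬝ᵥ v) ≤ v ⬝ᵥ (A *ᵥ v)) :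
    a ≤ sortedEigenvalues hA ⟨1, h⟩ := by
  obtain ⟨e, he⟩ := exists_equiv_sortedEigenvalues_eq hA
  have h01 : (⟨0, by omega⟩ : Fin (Fintype.card n)) ≠ ⟨1, h⟩ := by simp
  have hmax := hA.le_max_eigenvalues_of_forall_dotProduct_eq_zero w hq (e.injective.ne h01)
  have hle := monotone_sortedEigenvalues hA (a := ⟨0, by omega⟩) (b := ⟨1, h⟩) (Nat.zero_le _)
  simp only [he, Function.comp_apply] at hle ⊢
  rwa [max_eq_right hle] at hmax

theorem specGap_eq (h : 2 ≤ Fintype.card n) :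
    specGap hA = sortedEigenvalues hA ⟨1, by omega⟩ - sortedEigenvalues hA ⟨0, by omega⟩ :=
  dif_pos h

end SortedEigenvalues

section Hamiltonian

variable {V : Type*} [Fintype V] [DecidableEq V] (G : SimpleGraph V) [DecidableRel G.Adj]
  (W : V → ℝ) (s : ℝ)

theorem hamiltonianS_apply_self (x : V) :
    hamiltonianS G W s x x = (1 - s) * G.degree x + s * W x := by
  simp [hamiltonianS, SimpleGraph.lapMatrix, SimpleGraph.degMatrix]

theorem dotProduct_hamiltonianS_mulVec (v : V → ℝ) :
    v ⬝ᵥ (hamiltonianS G W s *ᵥ v) =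
      (1 - s) * (v ⬝ᵥ (G.lapMatrix ℝ *ᵥ v)) + s * (v ⬝ᵥ (diagonal W *ᵥ v)) := by
  rw [hamiltonianS, add_mulVec, smul_mulVec, smul_mulVec, dotProduct_add, dotProduct_smul,
    dotProduct_smul, smul_eq_mul, smul_eq_mul]

theorem mul_dotProduct_self_le_dotProduct_diagonal_mulVec {x₀ : V} {c : ℝ}
    (hW : ∀ x ≠ x₀, c ≤ W x) {v : V → ℝ} (hv : v x₀ = 0) :
    c * (v ⬝ᵥ v) ≤ v ⬝ᵥ (diagonal W *ᵥ v) := by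
  simp only [dotProduct, mulVec_diagonal, Finset.mul_sum]
  refine Finset.sum_le_sum fun x _ => ?_
  rcases eq_or_ne x x₀ with rfl | hx
  · simp [hv]
  · nlinarith [hW x hx, mul_self_nonneg (v x)]

theorem mul_dotProduct_self_le_dotProduct_hamiltonianS_mulVec {x₀ : V} {c : ℝ}
    (hW : ∀ x ≠ x₀, c ≤ W x) (hs₀ : 0 ≤ s) (hs₁ : s ≤ 1) {v : V → ℝ} (hv : v x₀ = 0) :
    s * c * (v ⬝ᵥ v) ≤ v ⬝ᵥ (hamiltonianS G W s *ᵥ v) := by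
  have hL : 0 ≤ v ⬝ᵥ (G.lapMatrix ℝ *ᵥ v) := by
    simpa using (SimpleGraph.posSemidef_lapMatrix ℝ G).dotProduct_mulVec_nonneg v
  have hD := mul_dotProduct_self_le_dotProduct_diagonal_mulVec W hW hv
  rw [dotProduct_hamiltonianS_mulVec, mul_assoc]
  nlinarith [mul_nonneg (sub_nonneg.mpr hs₁) hL, mul_le_mul_of_nonneg_left hD hs₀]

end Hamiltonian

-- `1 / (8 * 0) = 0`, so for `d = 0` the window `[1 - 1 / (8 d), 1]` is `{1}`.
theorem one_div_eight_mul_natCast_le (d : ℕ) :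
    1 / (8 * (d : ℝ)) ≤ 1 / 8 ∧ 1 / (8 * (d : ℝ)) * d ≤ 1 / 8 := by
  rcases Nat.eq_zero_or_pos d with rfl | hd
  · norm_num
  · have hd' : (1 : ℝ) ≤ d := by exact_mod_cast hd
    refine ⟨by gcongr; linarith, ?_⟩
    rw [div_mul_eq_mul_div, one_mul, div_mul_cancel_right₀ (by positivity)]
    norm_num

theorem stmt_18_general {V : Type*} [Fintype V] [DecidableEq V]
    (G : SimpleGraph V) [DecidableRel G.Adj]
    (hcard : 2 ≤ Fintype.card V) (W : V → ℝ)
    (hmin : ∃ x₀ : V, ∀ x, x ≠ x₀ → W x₀ + 1 ≤ W x) :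
    ∀ s ∈ Set.Icc (1 - 1 / (8 * (G.maxDegree : ℝ))) 1,
      specGap (hamiltonianS_isHermitian G W s) ≥
          1 / 2 - 1 / (8 * (G.maxDegree : ℝ)) ∧
        (2 ≤ G.maxDegree → specGap (hamiltonianS_isHermitian G W s) ≥ 7 / 16) := by
  obtain ⟨x₀, hx₀⟩ := hmin
  rintro s ⟨hs_ge, hs_le⟩
  obtain ⟨hinv, hinv_mul⟩ := one_div_eight_mul_natCast_le G.maxDegree
  have hdeg : (G.degree x₀ : ℝ) ≤ G.maxDegree := by exact_mod_cast G.degree_le_maxDegree x₀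
  set d : ℝ := (G.maxDegree : ℝ)
  have hdrift : (1 - s) * d ≤ 1 / 8 :=
    (mul_le_mul_of_nonneg_right (by linarith) (by positivity)).trans hinv_mul
  have hH := hamiltonianS_isHermitian G W s
  have hground : sortedEigenvalues hH ⟨0, by omega⟩ ≤ (1 - s) * d + s * W x₀ := by
    have := sortedEigenvalues_zero_mul_le hH (by omega) (Pi.single x₀ 1)
    simp only [dotProduct_single_one, mulVec_single_one, single_dotProduct, Pi.single_eq_same,
      mul_one, one_mul, col_apply, hamiltonianS_apply_self] at this
    nlinarith [mul_le_mul_of_nonneg_left hdeg (sub_nonneg.mpr hs_le)]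
  have hexcited : s * (W x₀ + 1) ≤ sortedEigenvalues hH ⟨1, by omega⟩ :=
    le_sortedEigenvalues_one hH (by omega) (Pi.single x₀ 1) fun v hv =>
      mul_dotProduct_self_le_dotProduct_hamiltonianS_mulVec G W s hx₀ (by linarith) hs_le
        (by simpa using hv)
  have hgap : specGap hH ≥ 1 / 2 - 1 / (8 * d) := by
    rw [specGap_eq hH hcard]
    linarith
  refine ⟨hgap, fun h2 => ?_⟩
  have : 1 / (8 * d) ≤ 1 / 16 := by
    gcongr
    linarith [(Nat.ofNat_le_cast.mpr h2 : (2 : ℝ) ≤ d)]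
  linarith

/-- Endgame gap bound for adiabatic optimization: if `W` has a unique minimizer and
its second-smallest value exceeds its minimum by at least `1`, then for all
`s ∈ [1 − 1/(8d_G), 1]` the spectral gap of `H(s) = (1−s)L_G + s·diag W` is at least
`1/2 − 1/(8d_G)`; in particular it is at least `7/16` when `d_G ≥ 2`. -/
theorem stmt_18 {V : Type*} [Fintype V] [DecidableEq V]
    (G : SimpleGraph V) [DecidableRel G.Adj] (hG : G.Connected)
    (hcard : 2 ≤ Fintype.card V) (W : V → ℝ)
    (hmin : ∃ x₀ : V, ∀ x, x ≠ x₀ → W x₀ + 1 ≤ W x) :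
    ∀ s ∈ Set.Icc (1 - 1 / (8 * (G.maxDegree : ℝ))) 1,
      specGap (hamiltonianS_isHermitian G W s) ≥
          1 / 2 - 1 / (8 * (G.maxDegree : ℝ)) ∧
        (2 ≤ G.maxDegree → specGap (hamiltonianS_isHermitian G W s) ≥ 7 / 16) :=
  stmt_18_general G hcard W hmin
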